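/- arXiv:2404.09062 — 2 statements merged into one kernel-verified Lean document; each statement's English description precedes it below -/
import Mathlib

section
/- Chernoff bound for the hypothesis-testing error: if H ~ Binomial(n, p) with p < 1/2, then P(H ≥ n/2) ≤ e^{-n·D(1/2 ‖ p)}, where D(a‖b) = a log(a/b) + (1-a) log((1-a)/(1-b)) is the binary KL divergence. -/
open Finset

/-- Binary KL divergence `D(a‖b) = a log(a/b) + (1-a) log((1-a)/(1-b))`. -/
noncomputable def klBin (a b : ℝ) : ℝ :=
  a * Real.log (a / b) + (1 - a) * Real.log ((1 - a) / (1 - b))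

/-!
Every outcome `i ≥ n/2` has probability weight `p^i (1-p)^(n-i) ≤ (p(1-p))^(n/2)`, because
`p ≤ 1 - p`; summing against the binomial coefficients gives the bound `(2 √(p(1-p)))^n`,
and `2 √(p(1-p)) = exp(-D(1/2 ‖ p))`.
-/

theorem exp_neg_klBin_half {p : ℝ} (hp0 : 0 < p) (hp1 : p < 1) :
    Real.exp (-klBin (1 / 2) p) = 2 * √(p * (1 - p)) := by
  have hq : 0 < 1 - p := by linarith
  have hlog : Real.log (2 * √(p * (1 - p))) =
      Real.log 2 + (Real.log p + Real.log (1 - p)) / 2 := by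
    rw [Real.log_mul two_ne_zero (by positivity), Real.log_sqrt (by positivity),
      Real.log_mul hp0.ne' hq.ne']
  rw [← Real.exp_log (by positivity : 0 < 2 * √(p * (1 - p))), hlog]
  congr 1
  rw [klBin, Real.log_div (by norm_num) hp0.ne', Real.log_div (by norm_num) hq.ne',
    show (1 - 1 / 2 : ℝ) = 1 / 2 by norm_num, one_div, Real.log_inv]
  ring

theorem pow_mul_pow_sub_le_sqrt_mul_pow {a b : ℝ} (ha : 0 ≤ a) (hab : a ≤ b) {n i : ℕ}
    (hi : i ≤ n) (hni : n ≤ 2 * i) :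
    a ^ i * b ^ (n - i) ≤ √(a * b) ^ n := by
  have hb : 0 ≤ b := ha.trans hab
  rw [← sq_le_sq₀ (by positivity) (by positivity), ← pow_mul, pow_mul',
    Real.sq_sqrt (by positivity)]
  obtain ⟨k, rfl⟩ := Nat.exists_eq_add_of_le hi
  obtain ⟨j, rfl⟩ := Nat.exists_eq_add_of_le (show k ≤ i by omega)
  -- with `n = 2k + j`: `a^(2k+2j) b^(2k) ≤ a^(2k+j) b^(2k+j)` reduces to `a^j ≤ b^j`
  have hpow : a ^ j ≤ b ^ j := pow_le_pow_left₀ ha hab j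
  calc (a ^ (k + j) * b ^ (k + j + k - (k + j))) ^ 2
      = a ^ j * (a ^ (2 * k + j) * b ^ (2 * k)) := by
        rw [show k + j + k - (k + j) = k by omega]; ring
    _ ≤ b ^ j * (a ^ (2 * k + j) * b ^ (2 * k)) := by gcongr
    _ = (a * b) ^ (k + j + k) := by ring

theorem sum_binomial_upper_half_le {p : ℝ} (hp0 : 0 ≤ p) (hp : p ≤ 1 / 2) (n : ℕ) :
    (∑ i ∈ range (n + 1),
        if (n : ℝ) / 2 ≤ (i : ℝ) then (n.choose i : ℝ) * p ^ i * (1 - p) ^ (n - i) else 0)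
      ≤ (2 * √(p * (1 - p))) ^ n := by
  calc (∑ i ∈ range (n + 1),
        if (n : ℝ) / 2 ≤ (i : ℝ) then (n.choose i : ℝ) * p ^ i * (1 - p) ^ (n - i) else 0)
      ≤ ∑ i ∈ range (n + 1), (n.choose i : ℝ) * √(p * (1 - p)) ^ n := by
        refine sum_le_sum fun i hi ↦ ?_
        split_ifs with h
        · rw [mul_assoc]
          gcongr
          refine pow_mul_pow_sub_le_sqrt_mul_pow hp0 (by linarith) (mem_range_succ_iff.mp hi) ?_
          exact_mod_cast (div_le_iff₀' two_pos).mp h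
        · positivity
    _ = (2 * √(p * (1 - p))) ^ n := by
        rw [← sum_mul, ← Nat.cast_sum, Nat.sum_range_choose, mul_pow]
        push_cast
        rfl

theorem stmt6_general (n : ℕ) (p : ℝ) (hp0 : 0 < p) (hp : p < 1 / 2) :
    (∑ i ∈ Finset.range (n + 1),
        if (n : ℝ) / 2 ≤ (i : ℝ) then
          (n.choose i : ℝ) * p ^ i * (1 - p) ^ (n - i) else 0)
      ≤ Real.exp (-(n : ℝ) * klBin (1 / 2) p) := by
  rw [neg_mul_comm, Real.exp_nat_mul, exp_neg_klBin_half hp0 (by linarith)]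
  exact sum_binomial_upper_half_le hp0.le hp.le n

/-- Chernoff bound: if `H ~ Binomial(n, p)` with `p < 1/2`, then
`P(H ≥ n/2) ≤ exp(-n · D(1/2 ‖ p))`. -/
theorem stmt6 (n : ℕ) (hn : 0 < n) (p : ℝ) (hp0 : 0 < p) (hp : p < 1 / 2) :
    (∑ i ∈ Finset.range (n + 1),
        if (n : ℝ) / 2 ≤ (i : ℝ) then
          (n.choose i : ℝ) * p ^ i * (1 - p) ^ (n - i) else 0)
      ≤ Real.exp (-(n : ℝ) * klBin (1 / 2) p) :=
  stmt6_general n p hp0 hp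
end

section
/- Subadditivity step of the converse: H(Z¹,…,Z^m) ≤ Σⱼ H(Zʲ) for finitely-valued random variables Zʲ, hence I(β; Z¹,…,Z^m) ≤ Σⱼ I(Xʲ; Zʲ) whenever each Zʲ is conditionally independent of (β, Z¹,…,Z^{j−1}) given Xʲ and Xʲ is a function of (β, Z¹,…,Z^{j−1}). -/
open Finset

variable {Ω : Type*} [Fintype Ω]

/-- Probability that a finitely-valued random variable `X` equals `a`. -/
def prob {α : Type*} [DecidableEq α] (w : Ω → ℝ) (X : Ω → α) (a : α) : ℝ :=
  ∑ ω, if X ω = a then w ω else 0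

/-- Shannon entropy of a finitely-valued random variable. -/
noncomputable def ent {α : Type*} [Fintype α] [DecidableEq α]
    (w : Ω → ℝ) (X : Ω → α) : ℝ :=
  -∑ a, prob w X a * Real.log (prob w X a)

/-- Mutual information `I(X;Z) = H(X) + H(Z) - H(X,Z)`. -/
noncomputable def mutInf {α β : Type*} [Fintype α] [DecidableEq α]
    [Fintype β] [DecidableEq β] (w : Ω → ℝ) (X : Ω → α) (Z : Ω → β) : ℝ :=
  ent w X + ent w Z - ent w (fun ω => (X ω, Z ω))

section Aux
variable {α γ δ : Type*} [Fintype α] [DecidableEq α] [Fintype γ] [DecidableEq γ]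
  [Fintype δ] [DecidableEq δ]
variable {w : Ω → ℝ}

set_option linter.unusedSectionVars false

lemma prob_nonneg (hw : ∀ ω, 0 ≤ w ω) (X : Ω → α) (a : α) : 0 ≤ prob w X a := by
  refine Finset.sum_nonneg fun ω _ => ?_
  split
  · exact hw ω
  · exact le_rfl

lemma sum_prob (hw1 : ∑ ω, w ω = 1) (X : Ω → α) : ∑ a, prob w X a = 1 := by
  rw [← hw1]
  unfold prob
  rw [Finset.sum_comm]
  exact Finset.sum_congr rfl fun ω _ => by simp

lemma sum_prob_pair_right (X : Ω → α) (Y : Ω → γ) (a : α) :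
    ∑ b, prob w (fun ω => (X ω, Y ω)) (a, b) = prob w X a := by
  unfold prob
  rw [Finset.sum_comm]
  refine Finset.sum_congr rfl fun ω _ => ?_
  by_cases h : X ω = a <;> simp [Prod.ext_iff, h]

lemma sum_prob_pair_left (X : Ω → α) (Y : Ω → γ) (b : γ) :
    ∑ a, prob w (fun ω => (X ω, Y ω)) (a, b) = prob w Y b := by
  unfold prob
  rw [Finset.sum_comm]
  refine Finset.sum_congr rfl fun ω _ => ?_
  by_cases h : Y ω = b <;> simp [Prod.ext_iff, h]

lemma sum_prob_triple_mid (Z : Ω → γ) (U : Ω → δ) (X : Ω → α) (z : γ) (x : α) :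
    ∑ u, prob w (fun ω => (Z ω, U ω, X ω)) (z, u, x)
      = prob w (fun ω => (Z ω, X ω)) (z, x) := by
  unfold prob
  rw [Finset.sum_comm]
  refine Finset.sum_congr rfl fun ω _ => ?_
  by_cases h1 : Z ω = z <;> by_cases h2 : X ω = x <;> simp [Prod.ext_iff, h1, h2]

end Aux

section Aux2
set_option linter.unusedSectionVars false
variable {α γ δ : Type*} [Fintype α] [DecidableEq α] [Fintype γ] [DecidableEq γ]
  [Fintype δ] [DecidableEq δ]
variable {w : Ω → ℝ}

lemma prob_pair_le_right (hw : ∀ ω, 0 ≤ w ω) (X : Ω → α) (Y : Ω → γ) (a : α) (b : γ) :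
    prob w (fun ω => (X ω, Y ω)) (a, b) ≤ prob w X a := by
  rw [← sum_prob_pair_right X Y a]
  exact Finset.single_le_sum
    (fun (b' : γ) _ => prob_nonneg hw (fun ω => (X ω, Y ω)) (a, b')) (Finset.mem_univ b)

lemma prob_pair_le_left (hw : ∀ ω, 0 ≤ w ω) (X : Ω → α) (Y : Ω → γ) (a : α) (b : γ) :
    prob w (fun ω => (X ω, Y ω)) (a, b) ≤ prob w Y b := by
  rw [← sum_prob_pair_left X Y b]
  exact Finset.single_le_sum
    (fun (a' : α) _ => prob_nonneg hw (fun ω => (X ω, Y ω)) (a', b)) (Finset.mem_univ a)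

lemma ent_comp (X : Ω → α) (f : α → γ) (hf : Function.Injective f) :
    ent w (fun ω => f (X ω)) = ent w X := by
  unfold ent
  congr 1
  have h1 : ∀ a, prob w (fun ω => f (X ω)) (f a) = prob w X a := fun a =>
    Finset.sum_congr rfl fun ω _ => by simp [hf.eq_iff]
  have h2 : ∀ c, c ∉ Finset.univ.image f → prob w (fun ω => f (X ω)) c = 0 := by
    intro c hc
    refine Finset.sum_eq_zero fun ω _ => ?_
    rw [if_neg]
    intro h
    exact hc (Finset.mem_image.2 ⟨X ω, Finset.mem_univ _, h⟩)
  rw [← Finset.sum_subset (Finset.subset_univ (Finset.univ.image f))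
      (fun c _ hc => by rw [h2 c hc]; simp)]
  rw [Finset.sum_image (fun a _ b _ h => hf h)]
  exact Finset.sum_congr rfl fun a _ => by rw [h1]

lemma ent_const (hw1 : ∑ ω, w ω = 1) (c : α) : ent w (fun _ : Ω => c) = 0 := by
  unfold ent
  have hp : ∀ a, prob w (fun _ : Ω => c) a = if c = a then 1 else 0 := by
    intro a
    unfold prob
    split <;> simp_all
  simp [hp, apply_ite Real.log, ite_mul]

lemma gibbs {ι : Type*} [Fintype ι] (a b : ι → ℝ) (ha : ∀ i, 0 ≤ a i)
    (hb : ∀ i, 0 ≤ b i) (hab : ∀ i, a i ≠ 0 → b i ≠ 0)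
    (hsum : ∑ i, b i ≤ ∑ i, a i) :
    ∑ i, a i * Real.log (b i) ≤ ∑ i, a i * Real.log (a i) := by
  have key : ∀ i, a i * Real.log (b i) - a i * Real.log (a i) ≤ b i - a i := by
    intro i
    rcases eq_or_lt_of_le (ha i) with h | h
    · simp [← h, hb i]
    · have hbpos : 0 < b i := (hb i).lt_of_ne' (hab i h.ne')
      have hlog := Real.log_le_sub_one_of_pos (div_pos hbpos h)
      rw [Real.log_div hbpos.ne' h.ne'] at hlog
      have := mul_le_mul_of_nonneg_left hlog h.le
      rw [mul_sub] at this
      have hd : a i * (b i / a i - 1) = b i - a i := by field_simp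
      nlinarith
  have hs := Finset.sum_le_sum (fun i (_ : i ∈ Finset.univ) => key i)
  rw [Finset.sum_sub_distrib, Finset.sum_sub_distrib] at hs
  linarith

end Aux2

section Aux3
set_option linter.unusedSectionVars false
variable {α γ δ : Type*} [Fintype α] [DecidableEq α] [Fintype γ] [DecidableEq γ]
  [Fintype δ] [DecidableEq δ]
variable {w : Ω → ℝ}

lemma ent_pair_le (hw : ∀ ω, 0 ≤ w ω) (hw1 : ∑ ω, w ω = 1) (X : Ω → α) (Y : Ω → γ) :
    ent w (fun ω => (X ω, Y ω)) ≤ ent w X + ent w Y := by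
  have hXsum : ∑ p : α × γ, prob w (fun ω => (X ω, Y ω)) p * Real.log (prob w X p.1)
      = ∑ a, prob w X a * Real.log (prob w X a) := by
    rw [Fintype.sum_prod_type]
    refine Finset.sum_congr rfl fun a _ => ?_
    dsimp only; rw [← Finset.sum_mul, sum_prob_pair_right]
  have hYsum : ∑ p : α × γ, prob w (fun ω => (X ω, Y ω)) p * Real.log (prob w Y p.2)
      = ∑ b, prob w Y b * Real.log (prob w Y b) := by
    rw [Fintype.sum_prod_type_right]
    refine Finset.sum_congr rfl fun b _ => ?_
    dsimp only; rw [← Finset.sum_mul, sum_prob_pair_left]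
  have hterm : ∀ p : α × γ, prob w (fun ω => (X ω, Y ω)) p * Real.log (prob w X p.1 * prob w Y p.2)
      = prob w (fun ω => (X ω, Y ω)) p * Real.log (prob w X p.1)
        + prob w (fun ω => (X ω, Y ω)) p * Real.log (prob w Y p.2) := by
    intro p
    rcases eq_or_ne (prob w (fun ω => (X ω, Y ω)) p) 0 with h0 | h0
    · simp [h0]
    · have hp : 0 < prob w (fun ω => (X ω, Y ω)) p :=
        (prob_nonneg hw _ p).lt_of_ne' h0
      have h1 : 0 < prob w X p.1 := hp.trans_le (prob_pair_le_right hw X Y p.1 p.2)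
      have h2 : 0 < prob w Y p.2 := hp.trans_le (prob_pair_le_left hw X Y p.1 p.2)
      rw [Real.log_mul h1.ne' h2.ne', mul_add]
  have hsumb : ∑ p : α × γ, prob w X p.1 * prob w Y p.2
      ≤ ∑ p : α × γ, prob w (fun ω => (X ω, Y ω)) p := by
    rw [sum_prob hw1 (fun ω => (X ω, Y ω)), Fintype.sum_prod_type]
    have : ∀ a : α, ∑ b : γ, prob w X a * prob w Y b = prob w X a := by
      intro a
      rw [← Finset.mul_sum, sum_prob hw1 Y, mul_one]
    rw [Finset.sum_congr rfl fun a _ => this a, sum_prob hw1 X]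
  have hg := gibbs (prob w (fun ω => (X ω, Y ω)))
    (fun p => prob w X p.1 * prob w Y p.2)
    (fun p => prob_nonneg hw _ p)
    (fun p => mul_nonneg (prob_nonneg hw _ _) (prob_nonneg hw _ _))
    (fun p hp => by
      have hp0 : 0 < prob w (fun ω => (X ω, Y ω)) p := (prob_nonneg hw _ p).lt_of_ne' hp
      have h1 : 0 < prob w X p.1 := hp0.trans_le (prob_pair_le_right hw X Y p.1 p.2)
      have h2 : 0 < prob w Y p.2 := hp0.trans_le (prob_pair_le_left hw X Y p.1 p.2)
      exact (mul_pos h1 h2).ne')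
    hsumb
  have hsplit : ∑ p : α × γ, prob w (fun ω => (X ω, Y ω)) p * Real.log (prob w X p.1 * prob w Y p.2)
      = ∑ p : α × γ, prob w (fun ω => (X ω, Y ω)) p * Real.log (prob w X p.1)
        + ∑ p : α × γ, prob w (fun ω => (X ω, Y ω)) p * Real.log (prob w Y p.2) := by
    rw [← Finset.sum_add_distrib]
    exact Finset.sum_congr rfl fun p _ => hterm p
  unfold ent
  linarith

lemma ent_condIndep (hw : ∀ ω, 0 ≤ w ω) (Z : Ω → γ) (U : Ω → δ) (X : Ω → α)
    (h : ∀ z u x, prob w (fun ω => (Z ω, U ω, X ω)) (z, u, x) * prob w X x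
      = prob w (fun ω => (Z ω, X ω)) (z, x) * prob w (fun ω => (U ω, X ω)) (u, x)) :
    ent w (fun ω => (Z ω, U ω, X ω))
      = ent w (fun ω => (Z ω, X ω)) + ent w (fun ω => (U ω, X ω)) - ent w X := by
  have mZX : ∀ z x, ∑ u, prob w (fun ω => (Z ω, U ω, X ω)) (z, u, x)
      = prob w (fun ω => (Z ω, X ω)) (z, x) := fun z x => sum_prob_triple_mid Z U X z x
  have mUX : ∀ q : δ × α, ∑ z, prob w (fun ω => (Z ω, U ω, X ω)) (z, q)
      = prob w (fun ω => (U ω, X ω)) q := fun q =>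
    sum_prob_pair_left Z (fun ω => (U ω, X ω)) q
  have mX : ∀ x, ∑ z, prob w (fun ω => (Z ω, X ω)) (z, x) = prob w X x := fun x =>
    sum_prob_pair_left Z X x
  have hb1 : ∀ z u x, prob w (fun ω => (Z ω, U ω, X ω)) (z, u, x)
      ≤ prob w (fun ω => (Z ω, X ω)) (z, x) := by
    intro z u x
    rw [← mZX z x]
    exact Finset.single_le_sum
      (fun (u' : δ) _ => prob_nonneg hw (fun ω => (Z ω, U ω, X ω)) (z, u', x))
      (Finset.mem_univ u)
  have hterm : ∀ t : γ × δ × α, prob w (fun ω => (Z ω, U ω, X ω)) t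
        * Real.log (prob w (fun ω => (Z ω, U ω, X ω)) t)
      = prob w (fun ω => (Z ω, U ω, X ω)) t
        * (Real.log (prob w (fun ω => (Z ω, X ω)) (t.1, t.2.2))
          + Real.log (prob w (fun ω => (U ω, X ω)) t.2)
          - Real.log (prob w X t.2.2)) := by
    rintro ⟨z, u, x⟩
    rcases eq_or_ne (prob w (fun ω => (Z ω, U ω, X ω)) (z, u, x)) 0 with h0 | h0
    · simp [h0]
    · have hp3 : 0 < prob w (fun ω => (Z ω, U ω, X ω)) (z, u, x) :=
        (prob_nonneg hw _ _).lt_of_ne' h0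
      have hZX : 0 < prob w (fun ω => (Z ω, X ω)) (z, x) := hp3.trans_le (hb1 z u x)
      have hX : 0 < prob w X x := hZX.trans_le (prob_pair_le_left hw Z X z x)
      have hUX : 0 < prob w (fun ω => (U ω, X ω)) (u, x) :=
        hp3.trans_le (prob_pair_le_left hw Z (fun ω => (U ω, X ω)) z (u, x))
      have heq := h z u x
      have hlog : Real.log (prob w (fun ω => (Z ω, U ω, X ω)) (z, u, x)) + Real.log (prob w X x)
          = Real.log (prob w (fun ω => (Z ω, X ω)) (z, x))
            + Real.log (prob w (fun ω => (U ω, X ω)) (u, x)) := by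
        rw [← Real.log_mul hp3.ne' hX.ne', ← Real.log_mul hZX.ne' hUX.ne', heq]
      have hl2 : Real.log (prob w (fun ω => (Z ω, U ω, X ω)) (z, u, x))
          = Real.log (prob w (fun ω => (Z ω, X ω)) (z, x))
            + Real.log (prob w (fun ω => (U ω, X ω)) (u, x)) - Real.log (prob w X x) := by
        linarith
      rw [hl2]
  have S1 : ∑ t : γ × δ × α, prob w (fun ω => (Z ω, U ω, X ω)) t
        * Real.log (prob w (fun ω => (Z ω, X ω)) (t.1, t.2.2))
      = ∑ p : γ × α, prob w (fun ω => (Z ω, X ω)) p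
        * Real.log (prob w (fun ω => (Z ω, X ω)) p) := by
    rw [Fintype.sum_prod_type, Fintype.sum_prod_type]
    refine Finset.sum_congr rfl fun z _ => ?_
    rw [Fintype.sum_prod_type_right]
    refine Finset.sum_congr rfl fun x _ => ?_
    dsimp only; rw [← Finset.sum_mul, mZX]
  have S2 : ∑ t : γ × δ × α, prob w (fun ω => (Z ω, U ω, X ω)) t
        * Real.log (prob w (fun ω => (U ω, X ω)) t.2)
      = ∑ q : δ × α, prob w (fun ω => (U ω, X ω)) q
        * Real.log (prob w (fun ω => (U ω, X ω)) q) := by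
    rw [Fintype.sum_prod_type, Finset.sum_comm]
    refine Finset.sum_congr rfl fun q _ => ?_
    dsimp only; rw [← Finset.sum_mul, mUX]
  have S3 : ∑ t : γ × δ × α, prob w (fun ω => (Z ω, U ω, X ω)) t
        * Real.log (prob w X t.2.2)
      = ∑ x, prob w X x * Real.log (prob w X x) := by
    rw [Fintype.sum_prod_type]
    have h1 : ∀ z : γ, ∑ q : δ × α, prob w (fun ω => (Z ω, U ω, X ω)) (z, q)
        * Real.log (prob w X q.2)
        = ∑ x, prob w (fun ω => (Z ω, X ω)) (z, x) * Real.log (prob w X x) := by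
      intro z
      rw [Fintype.sum_prod_type_right]
      refine Finset.sum_congr rfl fun x _ => ?_
      dsimp only; rw [← Finset.sum_mul, mZX]
    rw [Finset.sum_congr rfl fun z _ => h1 z, Finset.sum_comm]
    refine Finset.sum_congr rfl fun x _ => ?_
    rw [← Finset.sum_mul, mX]
  have hsplit : ∑ t : γ × δ × α, prob w (fun ω => (Z ω, U ω, X ω)) t
        * Real.log (prob w (fun ω => (Z ω, U ω, X ω)) t)
      = ∑ t : γ × δ × α, prob w (fun ω => (Z ω, U ω, X ω)) t
          * Real.log (prob w (fun ω => (Z ω, X ω)) (t.1, t.2.2))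
        + ∑ t : γ × δ × α, prob w (fun ω => (Z ω, U ω, X ω)) t
          * Real.log (prob w (fun ω => (U ω, X ω)) t.2)
        - ∑ t : γ × δ × α, prob w (fun ω => (Z ω, U ω, X ω)) t
          * Real.log (prob w X t.2.2) := by
    rw [← Finset.sum_add_distrib, ← Finset.sum_sub_distrib]
    refine Finset.sum_congr rfl fun t _ => ?_
    rw [hterm t]
    ring
  unfold ent
  linarith
end Aux3


section Aux4
set_option linter.unusedSectionVars false
variable {α γ δ : Type*} [Fintype α] [DecidableEq α] [Fintype γ] [DecidableEq γ]
  [Fintype δ] [DecidableEq δ]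
variable {w : Ω → ℝ}

lemma step_eq (hw : ∀ ω, 0 ≤ w ω) (U : Ω → δ) (Zf : Ω → γ) (Xf : Ω → α) (f : δ → α)
    (hf : ∀ ω, Xf ω = f (U ω))
    (hci : ∀ z u x, prob w (fun ω => (Zf ω, U ω, Xf ω)) (z, u, x) * prob w Xf x
      = prob w (fun ω => (Zf ω, Xf ω)) (z, x) * prob w (fun ω => (U ω, Xf ω)) (u, x)) :
    ent w U + ent w Zf - ent w (fun ω => (U ω, Zf ω)) = mutInf w Xf Zf := by
  have e1 : ent w (fun ω => (U ω, Xf ω)) = ent w U := by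
    have hcomp : (fun ω => (U ω, Xf ω)) = fun ω => ((fun u => (u, f u)) (U ω)) :=
      funext fun ω => by rw [hf]
    rw [hcomp]
    exact ent_comp U (fun u => (u, f u)) (fun a b h => congrArg Prod.fst h)
  have e2 : ent w (fun ω => (Zf ω, U ω, Xf ω)) = ent w (fun ω => (U ω, Zf ω)) := by
    have hcomp : (fun ω => (Zf ω, U ω, Xf ω))
        = fun ω => ((fun p : δ × γ => (p.2, p.1, f p.1)) ((fun ω' => (U ω', Zf ω')) ω)) :=
      funext fun ω => by simp [hf]
    have hinj : Function.Injective (fun p : δ × γ => (p.2, p.1, f p.1)) := by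
      intro p q h
      simp only [Prod.mk.injEq] at h
      exact Prod.ext h.2.1 h.1
    rw [hcomp]
    exact ent_comp (fun ω' => (U ω', Zf ω')) (fun p : δ × γ => (p.2, p.1, f p.1)) hinj
  have e3 := ent_condIndep hw Zf U Xf hci
  have e4 : ent w (fun ω => (Xf ω, Zf ω)) = ent w (fun ω => (Zf ω, Xf ω)) := by
    have hcomp : (fun ω => (Xf ω, Zf ω))
        = fun ω => (Prod.swap ((fun ω' => (Zf ω', Xf ω')) ω)) := rfl
    rw [hcomp]
    exact ent_comp (fun ω' => (Zf ω', Xf ω')) Prod.swap Prod.swap_injective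
  unfold mutInf
  linarith
end Aux4



set_option maxHeartbeats 1000000 in
/-- Subadditivity step of the converse: if each `Xʲ` is a function of
`(β, Z¹,…,Z^{j−1})` and each `Zʲ` is conditionally independent of
`(β, Z¹,…,Z^{j−1})` given `Xʲ`, then `I(β; Z¹,…,Z^m) ≤ Σⱼ I(Xʲ; Zʲ)`. -/
theorem stmt12 {B ζ χ : Type*} [Fintype B] [DecidableEq B] [Fintype ζ]
    [DecidableEq ζ] [Fintype χ] [DecidableEq χ] (m : ℕ)
    (w : Ω → ℝ) (hw : ∀ ω, 0 ≤ w ω) (hw1 : ∑ ω, w ω = 1)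
    (β : Ω → B) (Z : Fin m → Ω → ζ) (X : Fin m → Ω → χ)
    (hfun : ∀ j : Fin m, ∃ f : B × (Fin j.val → ζ) → χ,
      ∀ ω, X j ω = f (β ω, fun i : Fin j.val => Z ⟨i.1, i.2.trans j.2⟩ ω))
    (hcondindep : ∀ (j : Fin m) (z : ζ) (u : B × (Fin j.val → ζ)) (x : χ),
      prob w (fun ω =>
          (Z j ω, (β ω, fun i : Fin j.val => Z ⟨i.1, i.2.trans j.2⟩ ω), X j ω))
          (z, u, x) * prob w (X j) x =
        prob w (fun ω => (Z j ω, X j ω)) (z, x) *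
          prob w (fun ω =>
            ((β ω, fun i : Fin j.val => Z ⟨i.1, i.2.trans j.2⟩ ω), X j ω))
            (u, x)) :
    mutInf w β (fun ω => (fun j : Fin m => Z j ω)) ≤
      ∑ j : Fin m, mutInf w (X j) (Z j) := by
  induction m with
  | zero =>
    have hconst : (fun ω => (fun j : Fin 0 => Z j ω))
        = fun _ : Ω => (Fin.elim0 : Fin 0 → ζ) :=
      funext fun ω => funext fun j => j.elim0
    rw [hconst]
    have h1 : ent w (fun _ : Ω => (Fin.elim0 : Fin 0 → ζ)) = 0 := ent_const hw1 _
    have h2 : ent w (fun ω => (β ω, (Fin.elim0 : Fin 0 → ζ))) = ent w β := by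
      have hcomp : (fun ω => (β ω, (Fin.elim0 : Fin 0 → ζ)))
          = fun ω => ((fun b => (b, (Fin.elim0 : Fin 0 → ζ))) (β ω)) := rfl
      rw [hcomp]
      exact ent_comp β (fun b => (b, (Fin.elim0 : Fin 0 → ζ))) (fun a b h => congrArg Prod.fst h)
    unfold mutInf
    simp [h1, h2]
  | succ m ih =>
    set T : Ω → (Fin m → ζ) := fun ω => fun j : Fin m => Z j.castSucc ω with hT
    have ihm := ih (fun j => Z j.castSucc) (fun j => X j.castSucc)
      (fun j => hfun j.castSucc) (fun j => hcondindep j.castSucc)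
    -- relate the (m+1)-tuple to (T, Z last)
    have hsnoc_inj : Function.Injective
        (fun p : (Fin m → ζ) × ζ => (Fin.snoc p.1 p.2 : Fin (m + 1) → ζ)) := by
      rintro ⟨t, z⟩ ⟨t', z'⟩ h
      simp only at h
      have h1 : z = z' := by
        have := congrFun h (Fin.last m); simpa using this
      have h2 : t = t' := funext fun i => by
        have := congrFun h i.castSucc; simpa using this
      simp [h1, h2]
    have hsnoc : ∀ ω, (fun j : Fin (m + 1) => Z j ω)
        = Fin.snoc (T ω) (Z (Fin.last m) ω) := by
      intro ω
      funext j
      induction j using Fin.lastCases with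
      | last => simp
      | cast i => simp [hT]
    have eT : ent w (fun ω => (fun j : Fin (m + 1) => Z j ω))
        = ent w (fun ω => (T ω, Z (Fin.last m) ω)) := by
      have hcomp : (fun ω => (fun j : Fin (m + 1) => Z j ω))
          = fun ω => ((fun p : (Fin m → ζ) × ζ => (Fin.snoc p.1 p.2 : Fin (m + 1) → ζ))
              ((fun ω' => (T ω', Z (Fin.last m) ω')) ω)) :=
        funext fun ω => hsnoc ω
      rw [hcomp]
      exact ent_comp (fun ω' => (T ω', Z (Fin.last m) ω'))
        (fun p : (Fin m → ζ) × ζ => (Fin.snoc p.1 p.2 : Fin (m + 1) → ζ)) hsnoc_inj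
    have hg2_inj : Function.Injective
        (fun p : (B × (Fin m → ζ)) × ζ => (p.1.1, (Fin.snoc p.1.2 p.2 : Fin (m + 1) → ζ))) := by
      rintro ⟨⟨b, t⟩, z⟩ ⟨⟨b', t'⟩, z'⟩ h
      simp only [Prod.mk.injEq] at h
      obtain ⟨hb, hs⟩ := h
      have := hsnoc_inj (a₁ := (t, z)) (a₂ := (t', z')) (by simpa using hs)
      simp only [Prod.mk.injEq] at this
      simp [hb, this.1, this.2]
    have eβT : ent w (fun ω => (β ω, (fun j : Fin (m + 1) => Z j ω)))
        = ent w (fun ω => ((β ω, T ω), Z (Fin.last m) ω)) := by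
      have hcomp : (fun ω => (β ω, (fun j : Fin (m + 1) => Z j ω)))
          = fun ω => ((fun p : (B × (Fin m → ζ)) × ζ =>
              (p.1.1, (Fin.snoc p.1.2 p.2 : Fin (m + 1) → ζ)))
              ((fun ω' => ((β ω', T ω'), Z (Fin.last m) ω')) ω)) :=
        funext fun ω => by rw [show (fun j : Fin (m+1) => Z j ω) = Fin.snoc (T ω) (Z (Fin.last m) ω) from hsnoc ω]
      rw [hcomp]
      exact ent_comp (fun ω' => ((β ω', T ω'), Z (Fin.last m) ω'))
        (fun p : (B × (Fin m → ζ)) × ζ => (p.1.1, (Fin.snoc p.1.2 p.2 : Fin (m + 1) → ζ))) hg2_inj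
    obtain ⟨f, hf⟩ := hfun (Fin.last m)
    have hstep : ent w (fun ω => (β ω, T ω)) + ent w (Z (Fin.last m))
        - ent w (fun ω => ((β ω, T ω), Z (Fin.last m) ω))
        = mutInf w (X (Fin.last m)) (Z (Fin.last m)) :=
      step_eq hw (fun ω => (β ω, T ω)) (Z (Fin.last m)) (X (Fin.last m)) f
        (fun ω => hf ω) (fun z u x => hcondindep (Fin.last m) z u x)
    have esub : ent w (fun ω => (T ω, Z (Fin.last m) ω))
        ≤ ent w T + ent w (Z (Fin.last m)) := ent_pair_le hw hw1 T (Z (Fin.last m))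
    rw [Fin.sum_univ_castSucc]
    unfold mutInf at ihm hstep ⊢
    simp only [hT] at eT eβT hstep esub
    dsimp only at ihm eT eβT hstep esub ⊢
    linarith
end
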